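/- The automorphism group of the alternating group A₄ is isomorphic to the symmetric group S₄. -/

import Mathlib

/-!
Conjugation gives a homomorphism `S₄ → Aut(A₄)`, injective because only the identity of `S₄`
commutes with all of `A₄`. Since `A₄` is generated by a `3`-cycle `a` and a double
transposition `b`, an automorphism is determined by the images of `a` and `b`, which have
orders `3` and `2`; as `A₄` has `8` elements of order `3` and `3` of order `2`, it has at most
`24 = |S₄|` automorphisms, so the injection is a bijection.
-/

open Equiv Subgroup

section

variable {G : Type*} [Group G]

theorem MulAut.conjNormal_injective {H : Subgroup G} [H.Normal]
    (hH : centralizer (H : Set G) = ⊥) :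
    Function.Injective (MulAut.conjNormal : G →* MulAut H) := by
  refine (injective_iff_map_eq_one _).2 fun g hg => ?_
  rw [← mem_bot, ← hH, mem_centralizer_iff]
  intro h hh
  have hconj : g * h * g⁻¹ = h := by
    simpa [MulAut.conjNormal_apply] using congrArg Subtype.val (DFunLike.congr_fun hg ⟨h, hh⟩)
  exact (mul_inv_eq_iff_eq_mul.1 hconj).symm

theorem MulAut.injective_apply_pair {a b : G} (hab : closure {a, b} = ⊤) :
    Function.Injective fun φ : MulAut G => (φ a, φ b) := by
  intro φ ψ h
  obtain ⟨ha, hb⟩ := Prod.mk.inj h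
  have : φ.toMonoidHom = ψ.toMonoidHom := by
    refine MonoidHom.eq_of_eqOn_dense hab ?_
    rintro x (rfl | rfl)
    exacts [ha, hb]
  exact MulEquiv.ext (DFunLike.congr_fun this :)

theorem MulAut.card_le_of_closure_pair_eq_top [Finite G] {a b : G} (hab : closure {a, b} = ⊤) :
    Nat.card (MulAut G) ≤
      Nat.card {g : G // orderOf g = orderOf a} * Nat.card {g : G // orderOf g = orderOf b} := by
  rw [← Nat.card_prod]
  exact Nat.card_le_card_of_injective
    (fun φ => (⟨φ a, φ.orderOf_eq a⟩, ⟨φ b, φ.orderOf_eq b⟩))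
    fun φ ψ h => MulAut.injective_apply_pair hab (by simpa using h)

end

namespace AlternatingFour

local notation "A₄" => alternatingGroup (Fin 4)

def threeCycle : A₄ := ⟨swap 0 1 * swap 1 2, Perm.mem_alternatingGroup.2 (by decide)⟩

def doubleTransposition : A₄ := ⟨swap 0 1 * swap 2 3, Perm.mem_alternatingGroup.2 (by decide)⟩

theorem orderOf_threeCycle : orderOf threeCycle = 3 :=
  orderOf_eq_prime (by decide) (by decide)

theorem orderOf_doubleTransposition : orderOf doubleTransposition = 2 :=
  orderOf_eq_prime (by decide) (by decide)

-- `A₄` is the Klein four-group `{1, b, a b a⁻¹, a⁻¹ b a}` extended by the powers of `a`.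
theorem exists_eq_pow_mul_pow_mul_pow (z : A₄) :
    ∃ i j : Fin 3, ∃ e : Fin 2,
      z = threeCycle ^ (i : ℕ) * doubleTransposition ^ (e : ℕ) * threeCycle ^ (j : ℕ) := by
  revert z
  decide

theorem closure_threeCycle_doubleTransposition :
    closure {threeCycle, doubleTransposition} = ⊤ := by
  refine eq_top_iff.2 fun z _ => ?_
  obtain ⟨i, j, e, rfl⟩ := exists_eq_pow_mul_pow_mul_pow z
  have ha : threeCycle ∈ closure {threeCycle, doubleTransposition} := subset_closure (by simp)
  have hb : doubleTransposition ∈ closure {threeCycle, doubleTransposition} :=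
    subset_closure (by simp)
  exact mul_mem (mul_mem (pow_mem ha _) (pow_mem hb _)) (pow_mem ha _)

theorem centralizer_eq_bot : centralizer (A₄ : Set (Perm (Fin 4))) = ⊥ := by
  have key : ∀ g : Perm (Fin 4), (∀ h : A₄, (h : Perm (Fin 4)) * g = g * h) → g = 1 := by
    decide
  exact eq_bot_iff.2 fun g hg => mem_bot.2 (key g fun h => hg h h.2)

theorem card_orderOf_eq_three : Nat.card {g : A₄ // orderOf g = 3} = 8 := by
  simp_rw [orderOf_eq_prime_iff, Nat.card_eq_fintype_card]
  decide

theorem card_orderOf_eq_two : Nat.card {g : A₄ // orderOf g = 2} = 3 := by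
  simp_rw [orderOf_eq_prime_iff, Nat.card_eq_fintype_card]
  decide

theorem card_mulAut_le : Nat.card (MulAut A₄) ≤ Nat.card (Perm (Fin 4)) := by
  have h := MulAut.card_le_of_closure_pair_eq_top closure_threeCycle_doubleTransposition
  rw [orderOf_threeCycle, orderOf_doubleTransposition, card_orderOf_eq_three,
    card_orderOf_eq_two] at h
  exact h.trans_eq (by rw [Nat.card_perm, Nat.card_fin]; rfl)

end AlternatingFour

theorem aut_alternating_four_iso_perm_four :
    Nonempty (MulAut (alternatingGroup (Fin 4)) ≃* Equiv.Perm (Fin 4)) := by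
  have hinj := MulAut.conjNormal_injective AlternatingFour.centralizer_eq_bot
  exact ⟨(MulEquiv.ofBijective _ (hinj.bijective_of_nat_card_le
    AlternatingFour.card_mulAut_le)).symm⟩
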